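/- For every α ∈ (0, 1/3] ∪ [2/3, 1) and every function f : ℝ → ℝ convex and continuous on [x, y] (with F' = f and Φ' = F on [x, y]), one has S²_α f(x,y) ≤ S¹_α f(x,y). -/

import Mathlib

open intervalIntegral MeasureTheory Set

lemma poly_int (a b e0 e1 e2 : ℝ) :
    ∫ t in a..b, (e0 + e1 * t + e2 * t ^ 2) =
      e0 * (b - a) + e1 * (b ^ 2 - a ^ 2) / 2 + e2 * (b ^ 3 - a ^ 3) / 3 := by
  have h : ∀ t : ℝ, HasDerivAt (fun u : ℝ => e0 * u + e1 * u ^ 2 / 2 + e2 * u ^ 3 / 3)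
      (e0 + e1 * t + e2 * t ^ 2) t := by
    intro t
    have h1 : HasDerivAt (fun u : ℝ => e0 * u) e0 t := by
      simpa using (hasDerivAt_id t).const_mul e0
    have h2 : HasDerivAt (fun u : ℝ => e1 * u ^ 2 / 2) (e1 * t) t := by
      have := ((hasDerivAt_pow 2 t).const_mul e1).div_const 2
      refine this.congr_deriv ?_
      ring
    have h3 : HasDerivAt (fun u : ℝ => e2 * u ^ 3 / 3) (e2 * t ^ 2) t := by
      have := ((hasDerivAt_pow 3 t).const_mul e2).div_const 3
      refine this.congr_deriv ?_
      ring
    exact (h1.add h2).add h3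
  rw [integral_eq_sub_of_hasDerivAt (fun t _ => h t)
    (by apply Continuous.intervalIntegrable; continuity)]
  ring

set_option maxHeartbeats 8000000 in
lemma main_lemma (x y : ℝ) (hxy : x < y) (α : ℝ)
    (hα : α ∈ Set.Ioc (0 : ℝ) (1 / 3))
    (f F Φ : ℝ → ℝ)
    (hconv : ConvexOn ℝ (Set.Icc x y) f)
    (hcont : ContinuousOn f (Set.Icc x y))
    (hF : ∀ t ∈ Set.Icc x y, HasDerivAt F (f t) t)
    (hΦ : ∀ t ∈ Set.Icc x y, HasDerivAt Φ (F t) t) :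
    ((4 - 6 * α) * F y + (2 - 6 * α) * F x) / (y - x)
      - (6 - 12 * α) * (Φ y - Φ x) / (y - x) ^ 2
      ≤ ((-α / (1 - α)) * F x + ((2 * α - 1) / (α * (1 - α))) * F (α * x + (1 - α) * y)
          + ((1 - α) / α) * F y) / (y - x) := by
  obtain ⟨hα0, hα3⟩ := hα
  have h1α : (0:ℝ) < 1 - α := by linarith
  have hL : 0 < y - x := by linarith
  have hden : (0:ℝ) < 6 - 12 * α := by linarith
  set m : ℝ := α * x + (1 - α) * y with hm
  have hxm : x < m := by nlinarith
  have hmy : m < y := by nlinarith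
  have hmI : m ∈ Icc x y := ⟨hxm.le, hmy.le⟩
  set d : ℝ := -(6 - 12 * α) / (y - x) with hd
  have hdneg : d < 0 := div_neg_of_neg_of_pos (by linarith) hL
  set c1 : ℝ := α / (1 - α) + 2 - 6 * α + (6 - 12 * α) * x / (y - x) with hc1
  set c2 : ℝ := (1 - α) / α + 2 - 6 * α + (6 - 12 * α) * x / (y - x) with hc2
  set t1 : ℝ := x + (α / (1 - α) + 2 - 6 * α) / (6 - 12 * α) * (y - x) with ht1def
  have hAp : 0 < α / (1 - α) := div_pos hα0 h1α
  have hnum : 0 < α / (1 - α) + 2 - 6 * α := by linarith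
  have hxt1 : x < t1 := by
    rw [ht1def]
    nlinarith [div_pos hnum hden]
  have h3α : 0 ≤ 1/3 - α := by linarith
  have key : (α / (1 - α) + 2 - 6 * α) / (6 - 12 * α) < 1 - α := by
    have hA' : α / (1 - α) < (1 - α) * (6 - 12 * α) - (2 - 6 * α) := by
      rw [div_lt_iff₀ h1α]
      nlinarith [sq_nonneg (1/3 - α), mul_nonneg (mul_nonneg h3α h3α) h3α]
    rw [div_lt_iff₀ hden]
    linarith
  have ht1m : t1 < m := by
    rw [ht1def, hm]
    nlinarith [mul_lt_mul_of_pos_right key hL]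
  have hmt1 : 0 < m - t1 := by linarith
  have ht1I : t1 ∈ Icc x y := ⟨hxt1.le, by linarith⟩
  set K : ℝ := (f m - f t1) / (m - t1) with hK
  set ch : ℝ → ℝ := fun t => f t1 + K * (t - t1) with hch
  have hKm : K * (m - t1) = f m - f t1 := by
    rw [hK]; field_simp
  have hrep : ∀ t : ℝ, ch t = (f t1 * (m - t) + f m * (t - t1)) / (m - t1) := by
    intro t
    show f t1 + K * (t - t1) = _
    rw [hK]
    field_simp
    ring
  have hp1t1 : c1 + d * t1 = 0 := by
    rw [hc1, hd, ht1def]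
    have h12 : 6 - α * 12 ≠ 0 := by linarith
    field_simp
    ring
  have hcht1 : ch t1 = f t1 := by
    show f t1 + K * (t1 - t1) = f t1
    simp
  have hchm : ch m = f m := by
    show f t1 + K * (m - t1) = f m
    rw [hKm]; ring
  -- pointwise inequalities
  have hfg1 : ∀ t ∈ Icc x t1, ch t ≤ f t := by
    intro t ht
    rcases eq_or_lt_of_le ht.2 with heq | hlt
    · rw [heq, hcht1]
    · have hs := hconv.slope_mono_adjacent ⟨ht.1, by linarith [ht.2]⟩ hmI hlt ht1m
      rw [div_le_div_iff₀ (by linarith) hmt1] at hs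
      rw [hrep t, div_le_iff₀ hmt1]
      nlinarith [hs]
  have hfg2 : ∀ t ∈ Icc t1 m, f t ≤ ch t := by
    intro t ht
    rcases eq_or_lt_of_le ht.1 with heq | hlt1
    · rw [← heq, hcht1]
    rcases eq_or_lt_of_le ht.2 with heq | hlt2
    · rw [heq, hchm]
    have hs := hconv.slope_mono_adjacent ht1I hmI hlt1 hlt2
    rw [div_le_div_iff₀ (by linarith) (by linarith)] at hs
    rw [hrep t, le_div_iff₀ hmt1]
    nlinarith [hs]
  have hfg3 : ∀ t ∈ Icc m y, ch t ≤ f t := by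
    intro t ht
    rcases eq_or_lt_of_le ht.1 with heq | hlt
    · rw [← heq, hchm]
    · have hs := hconv.slope_mono_adjacent ht1I ⟨by linarith [ht.1], ht.2⟩ ht1m hlt
      rw [div_le_div_iff₀ hmt1 (by linarith)] at hs
      rw [hrep t, div_le_iff₀ hmt1]
      nlinarith [hs]
  -- sign of weights
  have hp1pos : ∀ t ∈ Icc x t1, 0 ≤ c1 + d * t := by
    intro t ht
    have := mul_le_mul_of_nonpos_left ht.2 hdneg.le
    linarith [hp1t1]
  have hp1neg : ∀ t ∈ Icc t1 m, c1 + d * t ≤ 0 := by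
    intro t ht
    have := mul_le_mul_of_nonpos_left ht.1 hdneg.le
    linarith [hp1t1]
  have hp2y : 0 ≤ c2 + d * y := by
    have he : c2 + d * y = (3 * α - 1) * (2 * α - 1) / α := by
      rw [hc2, hd]
      field_simp
      ring
    rw [he]
    apply div_nonneg _ hα0.le
    nlinarith
  have hp2pos : ∀ t ∈ Icc m y, 0 ≤ c2 + d * t := by
    intro t ht
    have := mul_le_mul_of_nonpos_left ht.2 hdneg.le
    linarith [hp2y]
  -- integrability
  have hsub : ∀ a b : ℝ, a ∈ Icc x y → b ∈ Icc x y → uIcc a b ⊆ Icc x y := by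
    intro a b ha hb
    intro u hu
    rcases le_total a b with hab | hab
    · rw [uIcc_of_le hab] at hu
      exact ⟨le_trans ha.1 hu.1, le_trans hu.2 hb.2⟩
    · rw [uIcc_of_ge hab] at hu
      exact ⟨le_trans hb.1 hu.1, le_trans hu.2 ha.2⟩
  have hchc : Continuous ch := by
    show Continuous fun t => f t1 + K * (t - t1)
    continuity
  have hfint : ∀ a b : ℝ, a ∈ Icc x y → b ∈ Icc x y → IntervalIntegrable f volume a b := by
    intro a b ha hb
    exact (hcont.mono (hsub a b ha hb)).intervalIntegrable
  have htfint : ∀ a b : ℝ, a ∈ Icc x y → b ∈ Icc x y →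
      IntervalIntegrable (fun t => t * f t) volume a b := by
    intro a b ha hb
    exact ((continuous_id.continuousOn).mul (hcont.mono (hsub a b ha hb))).intervalIntegrable
  have hfpint : ∀ (c : ℝ) (a b : ℝ), a ∈ Icc x y → b ∈ Icc x y →
      IntervalIntegrable (fun t => f t * (c + d * t)) volume a b := by
    intro c a b ha hb
    exact ((hcont.mono (hsub a b ha hb)).mul (by continuity : Continuous fun t : ℝ => c + d * t).continuousOn).intervalIntegrable
  have hchpint : ∀ (c : ℝ) (a b : ℝ),
      IntervalIntegrable (fun t => ch t * (c + d * t)) volume a b := by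
    intro c a b
    exact ((hchc.mul (by continuity : Continuous fun t : ℝ => c + d * t))).intervalIntegrable a b
  have hdiffint : ∀ (c : ℝ) (a b : ℝ), a ∈ Icc x y → b ∈ Icc x y →
      IntervalIntegrable (fun t => (f t - ch t) * (c + d * t)) volume a b := by
    intro c a b ha hb
    exact (((hcont.mono (hsub a b ha hb)).sub hchc.continuousOn).mul
      (by continuity : Continuous fun t : ℝ => c + d * t).continuousOn).intervalIntegrable
  -- FTC
  have hFTC : ∀ a b : ℝ, a ∈ Icc x y → b ∈ Icc x y → ∫ t in a..b, f t = F b - F a := by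
    intro a b ha hb
    exact integral_eq_sub_of_hasDerivAt (fun t htm => hF t (hsub a b ha hb htm)) (hfint a b ha hb)
  have hFTC2 : ∀ a b : ℝ, a ∈ Icc x y → b ∈ Icc x y →
      ∫ t in a..b, t * f t = (b * F b - Φ b) - (a * F a - Φ a) := by
    intro a b ha hb
    apply integral_eq_sub_of_hasDerivAt (f' := fun t => t * f t) _ (htfint a b ha hb)
    intro t htm
    have h1 := (hasDerivAt_id t).mul (hF t (hsub a b ha hb htm))
    have h2 := hΦ t (hsub a b ha hb htm)
    exact (h1.sub h2).congr_deriv (by simp only [id_eq]; ring)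
  have hdecomp : ∀ (c : ℝ) (a b : ℝ), a ∈ Icc x y → b ∈ Icc x y →
      ∫ t in a..b, f t * (c + d * t)
        = c * (F b - F a) + d * ((b * F b - Φ b) - (a * F a - Φ a)) := by
    intro c a b ha hb
    have he : (fun t => f t * (c + d * t)) = fun t => c * f t + d * (t * f t) :=
      funext fun t => by ring
    rw [he, integral_add ((hfint a b ha hb).const_mul c) ((htfint a b ha hb).const_mul d),
      intervalIntegral.integral_const_mul, intervalIntegral.integral_const_mul, hFTC a b ha hb, hFTC2 a b ha hb]
  -- moment identity for the chord
  have hchpoly : ∀ c : ℝ, (fun t => ch t * (c + d * t)) = fun t =>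
      ((f t1 - K * t1) * c) + ((f t1 - K * t1) * d + K * c) * t + (K * d) * t ^ 2 := by
    intro c
    funext t
    show (f t1 + K * (t - t1)) * (c + d * t) = _
    ring
  have hzero : (∫ t in x..m, ch t * (c1 + d * t)) + (∫ t in m..y, ch t * (c2 + d * t)) = 0 := by
    rw [hchpoly c1, hchpoly c2, poly_int, poly_int, hc1, hc2, hd, hm]
    field_simp
    ring
  -- positivity of pieces
  have hIpos1 : 0 ≤ ∫ t in x..t1, (f t - ch t) * (c1 + d * t) :=
    integral_nonneg hxt1.le fun u hu =>
      mul_nonneg (sub_nonneg.2 (hfg1 u hu)) (hp1pos u hu)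
  have hIpos2 : 0 ≤ ∫ t in t1..m, (f t - ch t) * (c1 + d * t) :=
    intervalIntegral.integral_nonneg ht1m.le fun u hu => by
      nlinarith [sub_nonpos.2 (hfg2 u hu), hp1neg u hu]
  have hIpos3 : 0 ≤ ∫ t in m..y, (f t - ch t) * (c2 + d * t) :=
    integral_nonneg hmy.le fun u hu =>
      mul_nonneg (sub_nonneg.2 (hfg3 u hu)) (hp2pos u hu)
  have hadd1 : (∫ t in x..t1, (f t - ch t) * (c1 + d * t))
      + (∫ t in t1..m, (f t - ch t) * (c1 + d * t))
      = ∫ t in x..m, (f t - ch t) * (c1 + d * t) :=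
    integral_add_adjacent_intervals (hdiffint c1 x t1 ⟨le_rfl, hxy.le⟩ ht1I)
      (hdiffint c1 t1 m ht1I hmI)
  have hsum1 : ∫ t in x..m, f t * (c1 + d * t)
      = (∫ t in x..m, (f t - ch t) * (c1 + d * t)) + ∫ t in x..m, ch t * (c1 + d * t) := by
    rw [← integral_add (hdiffint c1 x m ⟨le_rfl, hxy.le⟩ hmI) (hchpint c1 x m)]
    congr 1
    funext t
    ring
  have hsum2 : ∫ t in m..y, f t * (c2 + d * t)
      = (∫ t in m..y, (f t - ch t) * (c2 + d * t)) + ∫ t in m..y, ch t * (c2 + d * t) := by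
    rw [← integral_add (hdiffint c2 m y hmI ⟨hxy.le, le_rfl⟩) (hchpint c2 m y)]
    congr 1
    funext t
    ring
  have hVpos : 0 ≤ (∫ t in x..m, f t * (c1 + d * t)) + ∫ t in m..y, f t * (c2 + d * t) := by
    linarith [hIpos1, hIpos2, hIpos3, hadd1, hzero, hsum1, hsum2]
  rw [hdecomp c1 x m ⟨le_rfl, hxy.le⟩ hmI, hdecomp c2 m y hmI ⟨hxy.le, le_rfl⟩] at hVpos
  have hfinal : ((-α / (1 - α)) * F x + ((2 * α - 1) / (α * (1 - α))) * F m
          + ((1 - α) / α) * F y) / (y - x)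
        - (((4 - 6 * α) * F y + (2 - 6 * α) * F x) / (y - x)
          - (6 - 12 * α) * (Φ y - Φ x) / (y - x) ^ 2)
      = (c1 * (F m - F x) + d * ((m * F m - Φ m) - (x * F x - Φ x))
          + (c2 * (F y - F m) + d * ((y * F y - Φ y) - (m * F m - Φ m)))) / (y - x) := by
    rw [hc1, hc2, hd, hm]
    field_simp
    ring
  have := div_nonneg hVpos hL.le
  linarith [hfinal, this]


theorem S2_le_S1 (x y : ℝ) (hxy : x < y) (α : ℝ)
    (hα : α ∈ Set.Ioc (0 : ℝ) (1 / 3) ∪ Set.Ico (2 / 3 : ℝ) 1)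
    (f F Φ : ℝ → ℝ)
    (hconv : ConvexOn ℝ (Set.Icc x y) f)
    (hcont : ContinuousOn f (Set.Icc x y))
    (hF : ∀ t ∈ Set.Icc x y, HasDerivAt F (f t) t)
    (hΦ : ∀ t ∈ Set.Icc x y, HasDerivAt Φ (F t) t) :
    ((4 - 6 * α) * F y + (2 - 6 * α) * F x) / (y - x)
      - (6 - 12 * α) * (Φ y - Φ x) / (y - x) ^ 2
      ≤ ((-α / (1 - α)) * F x + ((2 * α - 1) / (α * (1 - α))) * F (α * x + (1 - α) * y)
          + ((1 - α) / α) * F y) / (y - x) := by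
  rcases hα with h | h
  · exact main_lemma x y hxy α h f F Φ hconv hcont hF hΦ
  · obtain ⟨h23, h1⟩ := h
    have hβ : (1 - α) ∈ Set.Ioc (0 : ℝ) (1 / 3) := ⟨by linarith, by linarith⟩
    have hxy' : -y < -x := by linarith
    have hmem : ∀ t : ℝ, t ∈ Set.Icc (-y) (-x) → -t ∈ Set.Icc x y := by
      intro t ht
      exact ⟨by linarith [ht.2], by linarith [ht.1]⟩
    have hconv' : ConvexOn ℝ (Set.Icc (-y) (-x)) (fun t => f (-t)) := by
      refine ⟨convex_Icc _ _, ?_⟩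
      intro a ha b hb μ ν hμ hν hμν
      have := hconv.2 (hmem a ha) (hmem b hb) hμ hν hμν
      simp only [smul_eq_mul] at this ⊢
      rw [show -(μ * a + ν * b) = μ * -a + ν * -b by ring]
      exact this
    have hcont' : ContinuousOn (fun t => f (-t)) (Set.Icc (-y) (-x)) :=
      hcont.comp continuous_neg.continuousOn hmem
    have hF' : ∀ t ∈ Set.Icc (-y) (-x), HasDerivAt (fun u => -F (-u)) (f (-t)) t := by
      intro t ht
      have h1 := ((hF (-t) (hmem t ht)).comp t (hasDerivAt_neg t)).neg
      exact h1.congr_deriv (by simp)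
    have hΦ' : ∀ t ∈ Set.Icc (-y) (-x), HasDerivAt (fun u => Φ (-u)) (-F (-t)) t := by
      intro t ht
      have h1 := (hΦ (-t) (hmem t ht)).comp t (hasDerivAt_neg t)
      exact h1.congr_deriv (by simp)
    have key := main_lemma (-y) (-x) hxy' (1 - α) hβ (fun t => f (-t))
      (fun t => -F (-t)) (fun t => Φ (-t)) hconv' hcont' hF' hΦ'
    simp only [neg_neg] at key
    rw [show (1 - α) * -y + (1 - (1 - α)) * -x = -(α * x + (1 - α) * y) by ring] at key
    convert key using 1 <;> ring
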